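/- arXiv:2404.01820 — 4 statements merged into one kernel-verified Lean document; each statement's English description precedes it below -/
import Mathlib

section
/- If q ∈ ℝ^ℰ satisfies q ≥ 0 componentwise and B q = 0 (a balanced, i.e., steady-state, flow), then the matrix Ã(q) + Ã(q)ᵀ is negative semidefinite. -/
open Matrix

/-- `B` is an incidence matrix: every column contains exactly one entry `+1`,
exactly one entry `-1`, and all other entries zero. -/
def IsIncidence {V E : Type*} (B : Matrix V E ℝ) : Prop :=
  ∀ e : E, ∃ v w : V, v ≠ w ∧ B v e = 1 ∧ B w e = -1 ∧
    ∀ u : V, u ≠ v → u ≠ w → B u e = 0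

/-- The thermal coupling matrix Ã(q) of a district heating grid at mass flows `q`,
built from `B₊ = (|B| + B)/2` and `B₋ = (|B| - B)/2`. -/
noncomputable def Atil {V E : Type*} [Fintype E] [DecidableEq V] [DecidableEq E]
    (B : Matrix V E ℝ) (q : E → ℝ) : Matrix (V ⊕ E) (V ⊕ E) ℝ :=
  let Bp : Matrix V E ℝ := Matrix.of fun v e => (|B v e| + B v e) / 2
  let Bm : Matrix V E ℝ := Matrix.of fun v e => (|B v e| - B v e) / 2
  Matrix.fromBlocks (-(Matrix.diagonal (Bp *ᵥ q))) (Bp * Matrix.diagonal q)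
    (Matrix.diagonal q * Bmᵀ) (-(Matrix.diagonal q))

/-- If `q ≥ 0` componentwise and `B q = 0` (a balanced, steady-state flow), then
`Ã(q) + Ã(q)ᵀ` is negative semidefinite. -/
theorem Atil_add_transpose_negSemidef
    {V E : Type*} [Fintype V] [Fintype E] [DecidableEq V] [DecidableEq E]
    (B : Matrix V E ℝ) (hB : IsIncidence B)
    (q : E → ℝ) (hq : ∀ e, 0 ≤ q e) (hbal : B *ᵥ q = 0) :
    ∀ x : V ⊕ E → ℝ, x ⬝ᵥ ((Atil B q + (Atil B q)ᵀ) *ᵥ x) ≤ 0 := by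
  classical
  intro x
  choose v w hvw h1 hm1 h0 using hB
  set u : V → ℝ := fun a => x (Sum.inl a) with hu
  set y : E → ℝ := fun e => x (Sum.inr e) with hy
  -- pointwise formulas for B₊ and B₋
  have hBp : ∀ a e, (|B a e| + B a e) / 2 = (if a = v e then (1:ℝ) else 0) := by
    intro a e
    by_cases hav : a = v e
    · subst hav; simp [h1 e]
    · by_cases haw : a = w e
      · subst haw; simp [hm1 e, hav]
      · simp [h0 e a hav haw, hav]
  have hBm : ∀ a e, (|B a e| - B a e) / 2 = (if a = w e then (1:ℝ) else 0) := by
    intro a e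
    by_cases haw : a = w e
    · subst haw; simp [hm1 e]
    · by_cases hav : a = v e
      · subst hav; simp [h1 e, haw]
      · simp [h0 e a hav haw, haw]
  have hBe : ∀ a e, B a e = (if a = v e then (1:ℝ) else 0) - (if a = w e then 1 else 0) := by
    intro a e
    have hp := hBp a e
    have hm := hBm a e
    linarith
  -- balance : ∑ q u_v² = ∑ q u_w²
  have hT : ∑ e, q e * (u (v e))^2 = ∑ e, q e * (u (w e))^2 := by
    have h0' : ∑ a, (u a)^2 * (B *ᵥ q) a = 0 := by simp [hbal]
    have hsplit : ∑ a, (u a)^2 * (B *ᵥ q) a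
        = ∑ e, q e * (u (v e))^2 - ∑ e, q e * (u (w e))^2 := by
      simp only [mulVec, dotProduct, Finset.mul_sum]
      rw [Finset.sum_comm, ← Finset.sum_sub_distrib]
      refine Finset.sum_congr rfl fun e _ => ?_
      simp only [hBe, sub_mul, ite_mul, one_mul, zero_mul, mul_sub, mul_ite, mul_zero, mul_one]
      rw [Finset.sum_sub_distrib]
      simp only [Finset.sum_ite_eq', Finset.mem_univ, if_true]
      ring
    rw [hsplit] at h0'
    linarith
  -- the quadratic form
  have hx : x = Sum.elim u y := by funext i; cases i <;> rfl
  have hsym : x ⬝ᵥ ((Atil B q + (Atil B q)ᵀ) *ᵥ x)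
      = 2 * (x ⬝ᵥ (Atil B q *ᵥ x)) := by
    rw [add_mulVec, dotProduct_add, dotProduct_mulVec x ((Atil B q)ᵀ) x,
      vecMul_transpose, dotProduct_comm]
    ring
  have hmain : x ⬝ᵥ (Atil B q *ᵥ x)
      = -∑ e, q e * (u (v e))^2 + ∑ e, q e * y e * u (v e)
        + ∑ e, q e * y e * u (w e) - ∑ e, q e * (y e)^2 := by
    rw [hx, Atil]
    rw [fromBlocks_mulVec, sumElim_dotProduct_sumElim, ← Matrix.mulVec_mulVec,
      ← Matrix.mulVec_mulVec, dotProduct_add, dotProduct_add]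
    have t1 : u ⬝ᵥ (-(Matrix.diagonal ((Matrix.of fun a e => (|B a e| + B a e) / 2) *ᵥ q)) *ᵥ u)
        = -∑ e, q e * (u (v e))^2 := by
      rw [neg_mulVec, dotProduct_neg, neg_inj]
      simp only [dotProduct, mulVec, Matrix.of_apply, hBp, Matrix.diagonal_apply, ite_mul,
        zero_mul, one_mul, Finset.sum_ite_eq, Finset.mem_univ, if_true, Finset.sum_mul,
        Finset.mul_sum]
      rw [Finset.sum_comm]
      refine Finset.sum_congr rfl fun e _ => ?_
      simp only [mul_ite, ite_mul, mul_zero, zero_mul, Finset.sum_ite_eq', Finset.mem_univ,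
        if_true]
      ring
    have t2 : u ⬝ᵥ ((Matrix.of fun a e => (|B a e| + B a e) / 2) *ᵥ (Matrix.diagonal q *ᵥ y))
        = ∑ e, q e * y e * u (v e) := by
      simp only [dotProduct, mulVec, Matrix.of_apply, hBp, Matrix.diagonal_apply, ite_mul,
        zero_mul, one_mul, Finset.sum_ite_eq, Finset.mem_univ, if_true, Finset.mul_sum]
      rw [Finset.sum_comm]
      refine Finset.sum_congr rfl fun e _ => ?_
      simp only [mul_ite, ite_mul, mul_zero, zero_mul, Finset.sum_ite_eq', Finset.mem_univ,
        if_true]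
      ring
    have t3 : y ⬝ᵥ (Matrix.diagonal q *ᵥ ((Matrix.of fun a e => (|B a e| - B a e) / 2)ᵀ *ᵥ u))
        = ∑ e, q e * y e * u (w e) := by
      simp only [dotProduct, mulVec, Matrix.of_apply, Matrix.transpose_apply, hBm,
        Matrix.diagonal_apply, ite_mul, zero_mul, one_mul, Finset.sum_ite_eq, Finset.mem_univ,
        if_true]
      refine Finset.sum_congr rfl fun e _ => ?_
      simp only [mul_ite, mul_zero, Finset.mul_sum, Finset.sum_ite_eq', Finset.mem_univ, if_true]
      ring
    have t4 : y ⬝ᵥ (-(Matrix.diagonal q) *ᵥ y) = -∑ e, q e * (y e)^2 := by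
      rw [neg_mulVec, dotProduct_neg, neg_inj]
      simp only [dotProduct, mulVec, Matrix.diagonal_apply, ite_mul, zero_mul,
        Finset.sum_ite_eq, Finset.mem_univ, if_true]
      refine Finset.sum_congr rfl fun e _ => ?_
      ring
    simp only [Sum.elim_comp_inl, Sum.elim_comp_inr]
    rw [t1, t2, t3, t4]
    ring
  rw [hsym, hmain]
  have hfin : -∑ e, q e * (u (v e))^2 + ∑ e, q e * y e * u (v e)
        + ∑ e, q e * y e * u (w e) - ∑ e, q e * (y e)^2
      = -(1/2) * ∑ e, q e * ((u (v e) - y e)^2 + (u (w e) - y e)^2) := by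
    have expand : ∑ e, q e * ((u (v e) - y e)^2 + (u (w e) - y e)^2)
        = ∑ e, q e * (u (v e))^2 + ∑ e, q e * (u (w e))^2
          - 2 * ∑ e, q e * y e * u (v e) - 2 * ∑ e, q e * y e * u (w e)
          + 2 * ∑ e, q e * (y e)^2 := by
      simp only [Finset.mul_sum, ← Finset.sum_add_distrib, ← Finset.sum_sub_distrib]
      refine Finset.sum_congr rfl fun e _ => ?_
      ring
    rw [expand, ← hT]
    ring
  rw [hfin]
  have hnn : 0 ≤ ∑ e, q e * ((u (v e) - y e)^2 + (u (w e) - y e)^2) :=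
    Finset.sum_nonneg fun e _ => mul_nonneg (hq e) (by positivity)
  nlinarith [hnn]
end

section
/- If q ∈ ℝ^ℰ satisfies q ≥ 0 componentwise and B q = 0, and κ ∈ ℝ^{𝒱⊔ℰ} has all entries strictly positive, then the matrix (Ã(q) − diag(κ)) + (Ã(q) − diag(κ))ᵀ is negative definite. -/
open Matrix

private lemma quad_transpose_aux {n : Type*} [Fintype n] (A : Matrix n n ℝ) (x : n → ℝ) :
    x ⬝ᵥ (Aᵀ *ᵥ x) = x ⬝ᵥ (A *ᵥ x) := by
  simp only [dotProduct, Matrix.mulVec, Matrix.transpose_apply, Finset.mul_sum]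
  rw [Finset.sum_comm]
  apply Finset.sum_congr rfl; intro i _
  apply Finset.sum_congr rfl; intro j _
  ring

private lemma quad_diagonal_aux {n : Type*} [Fintype n] [DecidableEq n] (κ : n → ℝ)
    (x : n → ℝ) : x ⬝ᵥ (Matrix.diagonal κ *ᵥ x) = ∑ i, κ i * x i ^ 2 := by
  simp only [Matrix.mulVec_diagonal, dotProduct]
  apply Finset.sum_congr rfl; intro i _; ring

private lemma quad_Atil_aux
    {V E : Type*} [Fintype V] [Fintype E] [DecidableEq V] [DecidableEq E]
    (B : Matrix V E ℝ) (q : E → ℝ) (h t : E → V)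
    (hBp : ∀ v e, (|B v e| + B v e) / 2 = if v = h e then (1:ℝ) else 0)
    (hBm : ∀ v e, (|B v e| - B v e) / 2 = if v = t e then (1:ℝ) else 0)
    (x : V ⊕ E → ℝ) :
    x ⬝ᵥ (Atil B q *ᵥ x)
      = ∑ e, q e * (-(x (Sum.inl (h e)) * x (Sum.inl (h e)))
          + x (Sum.inl (h e)) * x (Sum.inr e) + x (Sum.inl (t e)) * x (Sum.inr e)
          - x (Sum.inr e) * x (Sum.inr e)) := by
  simp only [Atil]
  simp only [dotProduct, Fintype.sum_sum_type, Matrix.mulVec, Matrix.fromBlocks_apply₁₁,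
    Matrix.fromBlocks_apply₁₂, Matrix.fromBlocks_apply₂₁, Matrix.fromBlocks_apply₂₂,
    Matrix.neg_apply, Matrix.diagonal_apply, Matrix.mul_apply, Matrix.of_apply,
    Matrix.transpose_apply, hBp, hBm]
  simp only [ite_mul, one_mul, zero_mul, mul_ite, mul_one, mul_zero,
    Finset.sum_ite_eq, Finset.sum_ite_eq', Finset.mem_univ, if_true]
  have swap : ∀ (e1 : E) (v2 : V), (∑ e : E, if v2 = t e then if e1 = e then q e1 else 0 else 0)
      = (if v2 = t e1 then q e1 else 0) := by
    intro e1 v2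
    rw [Finset.sum_eq_single e1]
    · split_ifs <;> simp_all
    · intro b _ hb; split_ifs <;> simp_all
    · simp
  simp only [swap, apply_ite Neg.neg, neg_zero, ite_mul, zero_mul, neg_mul,
    Finset.sum_ite_eq, Finset.sum_ite_eq', Finset.mem_univ, if_true]
  simp only [Finset.sum_neg_distrib, Finset.sum_ite_eq, Finset.mem_univ, if_true,
    mul_neg, mul_add, Finset.mul_sum, mul_ite, mul_zero, ite_mul, zero_mul, Finset.sum_mul,
    Finset.sum_sub_distrib, Finset.sum_add_distrib]
  have c1 : (∑ x1 : V, ∑ x2 : E, if x1 = h x2 then x (Sum.inl x1) * (q x2 * x (Sum.inl x1)) else 0)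
      = ∑ x2 : E, x (Sum.inl (h x2)) * (q x2 * x (Sum.inl (h x2))) := by
    rw [Finset.sum_comm]
    simp [Finset.sum_ite_eq', Finset.mem_univ]
  have c2 : (∑ x1 : V, ∑ x2 : E, if x1 = h x2 then x (Sum.inl x1) * (q x2 * x (Sum.inr x2)) else 0)
      = ∑ x2 : E, x (Sum.inl (h x2)) * (q x2 * x (Sum.inr x2)) := by
    rw [Finset.sum_comm]
    simp [Finset.sum_ite_eq', Finset.mem_univ]
  rw [c1, c2]
  simp only [← Finset.sum_neg_distrib, ← Finset.sum_add_distrib]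
  apply Finset.sum_congr rfl; intro e _; ring

/-- If `q ≥ 0` componentwise, `B q = 0`, and all heat-loss coefficients `κ` are
strictly positive, then `(Ã(q) - diag κ) + (Ã(q) - diag κ)ᵀ` is negative definite. -/
theorem Atil_sub_diag_add_transpose_negDef
    {V E : Type*} [Fintype V] [Fintype E] [DecidableEq V] [DecidableEq E]
    (B : Matrix V E ℝ) (hB : IsIncidence B)
    (q : E → ℝ) (hq : ∀ e, 0 ≤ q e) (hbal : B *ᵥ q = 0)
    (κ : V ⊕ E → ℝ) (hκ : ∀ i, 0 < κ i) :
    ∀ x : V ⊕ E → ℝ, x ≠ 0 →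
      x ⬝ᵥ (((Atil B q - Matrix.diagonal κ) + (Atil B q - Matrix.diagonal κ)ᵀ) *ᵥ x) < 0 := by
  intro x hx
  choose h t hht hBh hBt hB0 using hB
  have hBp : ∀ v e, (|B v e| + B v e) / 2 = if v = h e then (1:ℝ) else 0 := by
    intro v e
    by_cases hv : v = h e
    · subst hv; rw [hBh]; norm_num
    · by_cases hw : v = t e
      · subst hw; rw [hBt]; norm_num [hv]
      · rw [hB0 e v hv hw]; norm_num [hv]
  have hBm : ∀ v e, (|B v e| - B v e) / 2 = if v = t e then (1:ℝ) else 0 := by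
    intro v e
    by_cases hw : v = t e
    · subst hw; rw [hBt]
      have : ¬ (t e = t e) → False := fun H => H rfl
      norm_num
    · by_cases hv : v = h e
      · subst hv; rw [hBh]; norm_num [hw]
      · rw [hB0 e v hv hw]; norm_num [hw]
  -- column formula
  have hcol : ∀ v e, B v e = (if v = h e then (1:ℝ) else 0) - (if v = t e then (1:ℝ) else 0) := by
    intro v e
    have h1 := hBp v e
    have h2 := hBm v e
    linarith
  -- balance transfer lemma
  have hbal' : ∀ f : V → ℝ, ∑ e, q e * f (h e) = ∑ e, q e * f (t e) := by
    intro f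
    have key : ∀ v, ∑ e, B v e * q e = 0 := by
      intro v
      have := congrFun hbal v
      simpa [Matrix.mulVec, dotProduct] using this
    have step : ∀ e, ∑ v, B v e * (q e * f v) = q e * f (h e) - q e * f (t e) := by
      intro e
      have : ∀ v, B v e * (q e * f v)
          = (if v = h e then q e * f v else 0) - (if v = t e then q e * f v else 0) := by
        intro v
        rw [hcol v e]
        by_cases h1 : v = h e <;> by_cases h2 : v = t e <;>
          simp [h1, h2, hht e, (hht e).symm]
      simp only [this, Finset.sum_sub_distrib, Finset.sum_ite_eq', Finset.mem_univ, if_true]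
    have main : ∑ e, (q e * f (h e) - q e * f (t e)) = 0 := by
      calc ∑ e, (q e * f (h e) - q e * f (t e)) = ∑ e, ∑ v, B v e * (q e * f v) := by
            exact Finset.sum_congr rfl fun e _ => (step e).symm
        _ = ∑ v, ∑ e, B v e * (q e * f v) := Finset.sum_comm
        _ = ∑ v, (∑ e, B v e * q e) * f v := by
            apply Finset.sum_congr rfl; intro v _
            rw [Finset.sum_mul]
            apply Finset.sum_congr rfl; intro e _; ring
        _ = 0 := by simp [key]
    rw [Finset.sum_sub_distrib] at main
    linarith
  set y : V → ℝ := fun v => x (Sum.inl v) with hy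
  set z : E → ℝ := fun e => x (Sum.inr e) with hz
  have hquad := quad_Atil_aux B q h t hBp hBm x
  -- rewrite the full quadratic form
  have expand : x ⬝ᵥ (((Atil B q - Matrix.diagonal κ) + (Atil B q - Matrix.diagonal κ)ᵀ) *ᵥ x)
      = 2 * (x ⬝ᵥ (Atil B q *ᵥ x)) - 2 * ∑ i, κ i * x i ^ 2 := by
    rw [Matrix.add_mulVec, dotProduct_add, Matrix.sub_mulVec, dotProduct_sub,
      Matrix.transpose_sub, Matrix.sub_mulVec, dotProduct_sub,
      quad_transpose_aux, Matrix.diagonal_transpose, quad_diagonal_aux]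
    ring
  rw [expand, hquad]
  have key0 : ∑ e, q e * (y (h e) * y (h e)) = ∑ e, q e * (y (t e) * y (t e)) :=
    hbal' (fun v => y v * y v)
  have main_eq : (∑ e, q e * (-(y (h e) * y (h e)) + y (h e) * z e + y (t e) * z e
        - z e * z e))
      = (∑ e, q e * (-(((y (h e) - z e)^2 + (z e - y (t e))^2) / 2)))
        + (∑ e, q e * (y (t e) * y (t e)) - ∑ e, q e * (y (h e) * y (h e))) / 2 := by
    rw [← Finset.sum_sub_distrib, Finset.sum_div, ← Finset.sum_add_distrib]
    apply Finset.sum_congr rfl; intro e _; ring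
  rw [main_eq, key0, sub_self, zero_div, add_zero]
  have hsum_nonpos : (∑ e, q e * (-(((y (h e) - z e)^2 + (z e - y (t e))^2) / 2))) ≤ 0 := by
    apply Finset.sum_nonpos
    intro e _
    apply mul_nonpos_of_nonneg_of_nonpos (hq e)
    have : (0:ℝ) ≤ ((y (h e) - z e)^2 + (z e - y (t e))^2) / 2 := by positivity
    linarith
  have hpos : 0 < ∑ i, κ i * x i ^ 2 := by
    obtain ⟨i, hi⟩ : ∃ i, x i ≠ 0 := by
      by_contra hcon
      push_neg at hcon
      exact hx (funext hcon)
    apply Finset.sum_pos'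
    · intro j _
      have := (hκ j).le
      positivity
    · exact ⟨i, Finset.mem_univ i, by
        have h1 := hκ i
        have h2 : 0 < x i ^ 2 := by positivity
        positivity⟩
  nlinarith
end

section
/- There exists Δt₀ > 0 such that for every step size Δt ∈ (0, Δt₀) the discrete-time linearized district heating grid system is stabilizable: there exists a matrix G ∈ ℝ^{m×n} (with n = |𝓗| + |𝒱| + |ℰ| and m = |𝓕| + |ℰ|) such that every complex eigenvalue λ of the matrix I_n + Δt·M̄⁻¹·(A_ss + E G) satisfies |λ| < 1, where A_ss ∈ ℝ^{n×n} is the block-diagonal matrix with blocks 0 ∈ ℝ^{𝓗×𝓗} and Ã(q̄_e) − diag(κ) ∈ ℝ^{(𝒱⊔ℰ)×(𝒱⊔ℰ)}, and E ∈ ℝ^{n×m} is the block matrix E = [[B_h Fᵀ, 0], [Â(T̄), [0; I_ℰ]]] whose first block row acts on the hot-storage-mass coordinates and whose second block row acts on the temperature coordinates. -/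
open Matrix

/-- The matrix Â(T̄) ∈ ℝ^{(𝒱⊔ℰ)×𝓕} whose `i`-th column is `Ã(Fᵀ eᵢ) T̄`. -/
noncomputable def Ahat {V E C : Type*} [Fintype E] [Fintype V] [Fintype C]
    [DecidableEq V] [DecidableEq E] [DecidableEq C]
    (B : Matrix V E ℝ) (F : Matrix C E ℝ) (T : V ⊕ E → ℝ) :
    Matrix (V ⊕ E) C ℝ :=
  Matrix.of fun ve i => (Atil B (Fᵀ *ᵥ Pi.single i 1) *ᵥ T) ve

/-!
Since `(B_h Fᵀ)ᵀ = F B_hᵀ` is injective, `B_h Fᵀ` has a right inverse `R`. Feeding the chord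
flows back through `-c R` gives the hot-storage masses the dynamics `ṁ_h = -c m_h`, and feeding
the edge temperatures back through `c Â(T̄) R` cancels the coupling of the masses into the edge
temperatures. The closed-loop matrix is then block lower triangular with diagonal blocks
`-c I` and `Ã(q̄_e) - diag κ`. The matrix `Ã(q̄_e)` has nonnegative off-diagonal entries and zero
row sums, so every row of `Ã(q̄_e) - diag κ` is strictly diagonally dominant with negative
diagonal, with margin `κ`; for small `c` the remaining coupling of the masses into the vertex
temperatures fits into that margin. For such a matrix `A`, every row of `I + Δt M̄⁻¹ A` has
absolute sum below `1` once `Δt` is small, and Gershgorin's theorem puts all eigenvalues in the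
open unit disc.
-/

open Filter Topology Finset

theorem exists_pos_forall_mul_lt {ι : Type*} [Finite ι] (a b : ι → ℝ) (hb : ∀ i, 0 < b i) :
    ∃ c > 0, ∀ i, c * a i < b i := by
  have : ∀ᶠ c in 𝓝[>] (0 : ℝ), ∀ i, c * a i < b i := eventually_all.2 fun i =>
    nhdsWithin_le_nhds <| ((continuous_mul_const (a i)).tendsto' 0 0 (zero_mul _)).eventually
      (gt_mem_nhds (hb i))
  exact (this.and self_mem_nhdsWithin).exists.imp fun c h => ⟨h.2, h.1⟩

namespace Matrix

theorem exists_mul_eq_one_of_vecMul_injective {m n : Type*} [Fintype m] [Fintype n]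
    [DecidableEq m] (P : Matrix m n ℝ) (hP : Function.Injective P.vecMul) :
    ∃ R : Matrix n m ℝ, P * R = 1 := by
  have hPP : (P * Pᵀ).PosDef := by simpa using PosDef.mul_conjTranspose_self P hP
  exact ⟨Pᵀ * (P * Pᵀ)⁻¹, by
    rw [← Matrix.mul_assoc, mul_nonsing_inv _ ((isUnit_iff_isUnit_det _).1 hPP.isUnit)]⟩

variable {n : Type*} [Fintype n] [DecidableEq n]

theorem norm_lt_one_of_isRoot_charpoly {K : Type*} [NormedField K] {A : Matrix n n K}
    (hA : ∀ i, ∑ j, ‖A i j‖ < 1) {lam : K} (h : A.charpoly.IsRoot lam) : ‖lam‖ < 1 := by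
  have hev : Module.End.HasEigenvalue (toLin' A) lam := by
    rwa [Module.End.hasEigenvalue_iff_isRoot_charpoly, charpoly_toLin']
  obtain ⟨k, hk⟩ := eigenvalue_mem_ball hev
  rw [Metric.mem_closedBall, dist_eq_norm] at hk
  calc ‖lam‖ ≤ ‖A k k‖ + ‖lam - A k k‖ := norm_le_norm_add_norm_sub' _ _
    _ ≤ ‖A k k‖ + ∑ j ∈ univ.erase k, ‖A k j‖ := by gcongr
    _ = ∑ j, ‖A k j‖ := add_sum_erase _ (fun j => ‖A k j‖) (mem_univ k)
    _ < 1 := hA k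

def IsNegDiagDominant (A : Matrix n n ℝ) : Prop :=
  ∀ i, ∑ j ∈ univ.erase i, |A i j| < -A i i

theorem isNegDiagDominant_smul_one {a : ℝ} (ha : a < 0) :
    (a • 1 : Matrix n n ℝ).IsNegDiagDominant := fun i => by
  rw [sum_eq_zero fun j hj => by simp [one_apply_ne' (ne_of_mem_erase hj)]]
  simpa using ha

theorem isNegDiagDominant_fromBlocks {m : Type*} [Fintype m] [DecidableEq m]
    {A : Matrix n n ℝ} {C : Matrix m n ℝ} {D : Matrix m m ℝ} (hA : A.IsNegDiagDominant)
    (hD : ∀ i, ∑ j, |C i j| + ∑ j ∈ univ.erase i, |D i j| < -D i i) :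
    (fromBlocks A 0 C D).IsNegDiagDominant := by
  rintro (i | i)
  · have := hA i
    rw [sum_erase_eq_sub (mem_univ _)] at this ⊢
    simpa [Fintype.sum_sum_type] using this
  · have := hD i
    rw [sum_erase_eq_sub (mem_univ _)] at this ⊢
    simp only [Fintype.sum_sum_type, fromBlocks_apply₂₁, fromBlocks_apply₂₂]
    linarith

theorem sum_erase_abs_eq_neg_diag {M : Matrix n n ℝ} (hoff : ∀ i j, i ≠ j → 0 ≤ M i j)
    (hrow : M *ᵥ 1 = 0) (i : n) : ∑ j ∈ univ.erase i, |M i j| = -M i i := by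
  have hsum : ∑ j, M i j = 0 := by simpa [mulVec, dotProduct] using congrFun hrow i
  rw [sum_congr rfl fun j hj => abs_of_nonneg (hoff i j (ne_of_mem_erase hj).symm),
    sum_erase_eq_sub (mem_univ i), hsum, zero_sub]

theorem sum_erase_abs_sub_diagonal (M : Matrix n n ℝ) (d : n → ℝ) (i : n) :
    ∑ j ∈ univ.erase i, |(M - diagonal d) i j| = ∑ j ∈ univ.erase i, |M i j| :=
  sum_congr rfl fun j hj => by simp [diagonal_apply_ne _ (ne_of_mem_erase hj).symm]

theorem eventually_sum_abs_one_add_smul_lt_one {A : Matrix n n ℝ} (hA : A.IsNegDiagDominant)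
    {μ : n → ℝ} (hμ : ∀ i, 0 < μ i) :
    ∀ᶠ Δt in 𝓝[>] (0 : ℝ), ∀ i, ∑ j, |(1 + Δt • ((diagonal μ)⁻¹ * A)) i j| < 1 := by
  have hinv : (diagonal μ)⁻¹ = diagonal μ⁻¹ := inv_eq_left_inv <| by
    rw [diagonal_mul_diagonal, ← diagonal_one]
    exact congrArg diagonal (funext fun i => inv_mul_cancel₀ (hμ i).ne')
  have hsmall : ∀ i, ∀ᶠ Δt in 𝓝[>] (0 : ℝ), Δt * (μ i)⁻¹ * -A i i < 1 := fun i =>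
    nhdsWithin_le_nhds <| ((by fun_prop : Continuous fun t : ℝ => t * (μ i)⁻¹ * -A i i).tendsto'
      0 0 (by simp)).eventually (gt_mem_nhds one_pos)
  filter_upwards [eventually_all.2 hsmall, self_mem_nhdsWithin] with Δt hΔt (hpos : 0 < Δt) i
  have hentry : ∀ j, (1 + Δt • ((diagonal μ)⁻¹ * A)) i j
      = (1 : Matrix n n ℝ) i j + Δt * (μ i)⁻¹ * A i j := fun j => by
    simp [hinv, mul_assoc]
  have hscale : 0 < Δt * (μ i)⁻¹ := by have := hμ i; positivity
  have hoff : ∀ j ∈ univ.erase i, |(1 + Δt • ((diagonal μ)⁻¹ * A)) i j|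
      = Δt * (μ i)⁻¹ * |A i j| := fun j hj => by
    rw [hentry, one_apply_ne (ne_of_mem_erase hj).symm, zero_add, abs_mul, abs_of_pos hscale]
  rw [← add_sum_erase _ _ (mem_univ i), sum_congr rfl hoff, ← mul_sum, hentry, one_apply_eq,
    abs_of_pos (by linarith [hΔt i])]
  linarith [mul_lt_mul_of_pos_left (hA i) hscale]

theorem eventually_norm_lt_one_of_isRoot_charpoly {A : Matrix n n ℝ} (hA : A.IsNegDiagDominant)
    {μ : n → ℝ} (hμ : ∀ i, 0 < μ i) :
    ∀ᶠ Δt in 𝓝[>] (0 : ℝ), ∀ lam : ℂ,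
      (((1 + Δt • ((diagonal μ)⁻¹ * A)).map Complex.ofReal).charpoly).IsRoot lam → ‖lam‖ < 1 := by
  filter_upwards [eventually_sum_abs_one_add_smul_lt_one hA hμ] with Δt hΔt lam hroot
  exact norm_lt_one_of_isRoot_charpoly (fun i => by simpa only [map_apply, Complex.norm_real, Real.norm_eq_abs] using hΔt i) hroot

theorem fromBlocks_add_fromBlocks_mul_feedback {α H C V E : Type*} [CommRing α] [Fintype H]
    [Fintype C] [Fintype E] [DecidableEq H] [DecidableEq E]
    {P : Matrix H C α} {R : Matrix C H α} (hPR : P * R = 1) (Ah : Matrix (V ⊕ E) C α)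
    (S : Matrix (V ⊕ E) (V ⊕ E) α) (c : α) :
    fromBlocks 0 0 0 S + fromBlocks P 0 Ah (fromRows 0 1) *
        fromBlocks (-c • R) 0 (c • (Ah * R).toRows₂) (0 : Matrix E (V ⊕ E) α) =
      fromBlocks (-c • 1) 0 (fromRows (-c • (Ah * R).toRows₁) 0) S := by
  -- the non-square product elaborates through the `CStarMatrix` multiplication instance
  erw [Matrix.fromBlocks_multiply]
  rw [fromBlocks_add]
  congr 1
  · simp [hPR]
  · simp
  · ext (v | e) h <;> simp
  · simp

end Matrix

theorem IsIncidence.sum_abs_sub_div_two {V E : Type*} [Fintype V] [DecidableEq V] {B : Matrix V E ℝ}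
    (hB : IsIncidence B) (e : E) : ∑ v, (|B v e| - B v e) / 2 = 1 := by
  obtain ⟨v, w, hvw, hv, hw, h0⟩ := hB e
  rw [← add_sum_erase _ _ (mem_univ w), sum_eq_single_of_mem v (mem_erase.2 ⟨hvw, mem_univ v⟩)
    fun u hu huv => by simp [h0 u huv (ne_of_mem_erase hu)]]
  norm_num [hv, hw]

section Atil

variable {V E : Type*} [Fintype E] [DecidableEq V] [DecidableEq E]

theorem Atil_apply_nonneg_of_ne (B : Matrix V E ℝ) {q : E → ℝ} (hq : ∀ e, 0 ≤ q e)
    {i j : V ⊕ E} (hij : i ≠ j) : 0 ≤ Atil B q i j := by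
  have habs : ∀ x : ℝ, 0 ≤ (|x| + x) / 2 ∧ 0 ≤ (|x| - x) / 2 := fun x =>
    ⟨by linarith [neg_abs_le x], by linarith [le_abs_self x]⟩
  rcases i with v | e <;> rcases j with w | e'
  · simp [Atil, show v ≠ w from fun h => hij (congrArg _ h)]
  · simpa [Atil] using mul_nonneg (habs _).1 (hq e')
  · simpa [Atil] using mul_nonneg (hq e) (habs _).2
  · simp [Atil, show e ≠ e' from fun h => hij (congrArg _ h)]

theorem Atil_mulVec_one [Fintype V] {B : Matrix V E ℝ} (hB : IsIncidence B) (q : E → ℝ) :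
    Atil B q *ᵥ 1 = 0 := by
  have hq : diagonal q *ᵥ 1 = q := funext fun e => by simp [mulVec_diagonal]
  ext (v | e)
  · simp [Atil, fromBlocks_mulVec, ← mulVec_mulVec, hq, mulVec_diagonal]
  · simp [Atil, fromBlocks_mulVec, ← mulVec_mulVec, mulVec_diagonal]
    simp [mulVec, dotProduct, hB.sum_abs_sub_div_two e]

theorem isNegDiagDominant_fromBlocks_Atil {H : Type*} [Fintype H] [DecidableEq H] [Fintype V]
    {B : Matrix V E ℝ} (hB : IsIncidence B) {q : E → ℝ} (hq : ∀ e, 0 ≤ q e)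
    {κ : V ⊕ E → ℝ} {K : Matrix (V ⊕ E) H ℝ} (hK : ∀ i, ∑ h, |K i h| < κ i) {c : ℝ}
    (hc : 0 < c) :
    (fromBlocks (-c • 1 : Matrix H H ℝ) 0 K (Atil B q - diagonal κ)).IsNegDiagDominant :=
  isNegDiagDominant_fromBlocks (isNegDiagDominant_smul_one (neg_neg_of_pos hc)) fun i => by
    rw [sum_erase_abs_sub_diagonal, sum_erase_abs_eq_neg_diag
      (fun _ _ => Atil_apply_nonneg_of_ne B hq) (Atil_mulVec_one hB q)]
    simpa using hK i

end Atil

theorem dhg_linearization_stabilizable_general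
    {H V E C : Type*} [Fintype H] [Fintype V] [Fintype E] [Fintype C]
    [DecidableEq H] [DecidableEq V] [DecidableEq E] [DecidableEq C]
    (B : Matrix V E ℝ) (hB : IsIncidence B)
    -- B_h is the submatrix of B consisting of the rows indexed by the hot layers
    (emb : H → V)
    (F : Matrix C E ℝ)
    -- ker (F B_hᵀ) = {0}
    (hker : ∀ z : H → ℝ, (F * (B.submatrix emb id)ᵀ) *ᵥ z = 0 → z = 0)
    -- steady-state chord flows with nonnegative balanced edge flows q̄_e = Fᵀ q̄_c
    (qc : C → ℝ) (hq : ∀ e, 0 ≤ (Fᵀ *ᵥ qc) e)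
    -- steady temperatures, strictly positive heat-loss coefficients and masses
    (T : V ⊕ E → ℝ) (κ : V ⊕ E → ℝ) (hκ : ∀ i, 0 < κ i)
    (μ : H ⊕ (V ⊕ E) → ℝ) (hμ : ∀ i, 0 < μ i) :
    ∃ Δt₀ > (0 : ℝ), ∀ Δt : ℝ, 0 < Δt → Δt < Δt₀ →
      ∃ G : Matrix (C ⊕ E) (H ⊕ (V ⊕ E)) ℝ,
        ∀ lam : ℂ,
          ((((1 : Matrix (H ⊕ (V ⊕ E)) (H ⊕ (V ⊕ E)) ℝ) +
              Δt • ((Matrix.diagonal μ)⁻¹ *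
                (Matrix.fromBlocks 0 0 0 (Atil B (Fᵀ *ᵥ qc) - Matrix.diagonal κ) +
                  Matrix.fromBlocks ((B.submatrix emb id) * Fᵀ) 0
                    (Ahat B F T) (Matrix.fromRows 0 1) * G))).map
              Complex.ofReal).charpoly).IsRoot lam → ‖lam‖ < 1 := by
  obtain ⟨R, hPR⟩ := exists_mul_eq_one_of_vecMul_injective (B.submatrix emb id * Fᵀ) <|
    (injective_iff_map_eq_zero (vecMulLinear _)).2 fun z hz => hker z <| by
      simpa [← mulVec_transpose, transpose_mul] using hz
  set Z := Ahat B F T * R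
  obtain ⟨c, hc, hcZ⟩ := exists_pos_forall_mul_lt (fun v => ∑ h, |Z (Sum.inl v) h|)
    (fun v => κ (Sum.inl v)) fun v => hκ _
  have hdom : (fromBlocks (-c • 1) 0 (fromRows (-c • Z.toRows₁) 0)
      (Atil B (Fᵀ *ᵥ qc) - diagonal κ)).IsNegDiagDominant := by
    refine isNegDiagDominant_fromBlocks_Atil hB hq ?_ hc
    rintro (v | e)
    · simpa [abs_mul, abs_of_pos hc, mul_sum] using hcZ v
    · simpa using hκ (Sum.inr e)
  obtain ⟨Δt₀, hΔt₀, hstable⟩ := mem_nhdsGT_iff_exists_Ioo_subset.1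
    (eventually_norm_lt_one_of_isRoot_charpoly hdom hμ)
  refine ⟨Δt₀, hΔt₀, fun Δt h0 h1 =>
    ⟨fromBlocks (-c • R) 0 (c • Z.toRows₂) 0, ?_⟩⟩
  rw [fromBlocks_add_fromBlocks_mul_feedback hPR]
  exact hstable ⟨h0, h1⟩

/-- Stabilizability of the Euler-discretized linearized district heating grid:
there is `Δt₀ > 0` such that for every step size `Δt ∈ (0, Δt₀)` there is a feedback
matrix `G` making all complex eigenvalues of `I + Δt ⬝ M̄⁻¹ (A_ss + E G)` lie in the
open unit disc. -/
theorem dhg_linearization_stabilizable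
    {H V E C : Type*} [Fintype H] [Fintype V] [Fintype E] [Fintype C]
    [DecidableEq H] [DecidableEq V] [DecidableEq E] [DecidableEq C]
    (B : Matrix V E ℝ) (hB : IsIncidence B)
    -- B_h is the submatrix of B consisting of the rows indexed by the hot layers
    (emb : H → V) (hemb : Function.Injective emb)
    (F : Matrix C E ℝ) (hF : ∀ i e, F i e = -1 ∨ F i e = 0 ∨ F i e = 1)
    -- ker (F B_hᵀ) = {0}
    (hker : ∀ z : H → ℝ, (F * (B.submatrix emb id)ᵀ) *ᵥ z = 0 → z = 0)
    -- steady-state chord flows with nonnegative balanced edge flows q̄_e = Fᵀ q̄_c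
    (qc : C → ℝ) (hq : ∀ e, 0 ≤ (Fᵀ *ᵥ qc) e) (hbal : B *ᵥ (Fᵀ *ᵥ qc) = 0)
    -- steady temperatures, strictly positive heat-loss coefficients and masses
    (T : V ⊕ E → ℝ) (κ : V ⊕ E → ℝ) (hκ : ∀ i, 0 < κ i)
    (μ : H ⊕ (V ⊕ E) → ℝ) (hμ : ∀ i, 0 < μ i) :
    ∃ Δt₀ > (0 : ℝ), ∀ Δt : ℝ, 0 < Δt → Δt < Δt₀ →
      ∃ G : Matrix (C ⊕ E) (H ⊕ (V ⊕ E)) ℝ,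
        ∀ lam : ℂ,
          ((((1 : Matrix (H ⊕ (V ⊕ E)) (H ⊕ (V ⊕ E)) ℝ) +
              Δt • ((Matrix.diagonal μ)⁻¹ *
                (Matrix.fromBlocks 0 0 0 (Atil B (Fᵀ *ᵥ qc) - Matrix.diagonal κ) +
                  Matrix.fromBlocks ((B.submatrix emb id) * Fᵀ) 0
                    (Ahat B F T) (Matrix.fromRows 0 1) * G))).map
              Complex.ofReal).charpoly).IsRoot lam → ‖lam‖ < 1 :=
  dhg_linearization_stabilizable_general B hB emb F hker qc hq T κ hκ μ hμ
end

section
/- Let M̄ ∈ ℝ^{n×n} be symmetric positive definite and let K ∈ ℝ^{n×n} be such that K + Kᵀ is negative definite. Then there exists Δt₀ > 0 such that for all Δt ∈ (0, Δt₀), every complex eigenvalue λ of the matrix I_n + Δt·M̄⁻¹·K satisfies |λ| < 1. -/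
/-!
If `M⁻¹ K x = μ x` with `x ≠ 0`, then `x* K x = μ (x* M x)` with `x* M x > 0`, and
`2 Re (x* K x) = x* (K + Kᵀ) x < 0`; hence every eigenvalue `μ` of `M⁻¹ K` has `Re μ < 0`.
The eigenvalues of `I + Δt M⁻¹ K` are the numbers `1 + Δt μ`, and
`|1 + Δt μ|² = 1 + Δt (2 Re μ + Δt |μ|²) < 1` once `0 < Δt < -2 Re μ / |μ|²`.
As there are finitely many `μ`, one `Δt₀` serves them all.
-/

open Matrix Filter Topology

theorem Complex.eventually_norm_one_add_mul_lt_one {μ : ℂ} (hμ : μ.re < 0) :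
    ∀ᶠ t : ℝ in 𝓝[>] 0, ‖1 + t * μ‖ < 1 := by
  have hμ0 : 0 < Complex.normSq μ := Complex.normSq_pos.2 fun h ↦ by simp [h] at hμ
  have hbound : 0 < -2 * μ.re / Complex.normSq μ := div_pos (by linarith) hμ0
  filter_upwards [Ioo_mem_nhdsGT hbound] with t ⟨ht0, ht⟩
  rw [lt_div_iff₀ hμ0] at ht
  have hsq : ‖1 + t * μ‖ ^ 2 = 1 + t * (2 * μ.re + t * Complex.normSq μ) := by
    rw [Complex.sq_norm, Complex.normSq_apply, Complex.normSq_apply]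
    simp only [Complex.add_re, Complex.add_im, Complex.mul_re, Complex.mul_im, Complex.ofReal_re,
      Complex.ofReal_im, Complex.one_re, Complex.one_im]
    ring
  have : ‖1 + t * μ‖ ^ 2 < 1 ^ 2 := by rw [hsq]; nlinarith
  exact lt_of_pow_lt_pow_left₀ 2 zero_le_one this

theorem spectrum.one_add_smul_eq {𝕜 A : Type*} [Field 𝕜] [Ring A] [Algebra 𝕜 A] (a : A) {t : 𝕜}
    (ht : t ≠ 0) : spectrum 𝕜 (1 + t • a) = (fun μ ↦ 1 + t * μ) '' spectrum 𝕜 a := by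
  have hsmul := spectrum.unit_smul_eq_smul a (Units.mk0 t ht)
  rw [Units.smul_def, Units.val_mk0] at hsmul
  rw [← map_one (algebraMap 𝕜 A), ← spectrum.vadd_eq, hsmul, ← Set.image_smul,
    ← Set.image_vadd, Set.image_image]
  rfl

namespace Matrix

variable {n : Type*} [Fintype n]

theorem exists_mulVec_eq_smul_of_mem_spectrum {K : Type*} [Field K] [DecidableEq n]
    {A : Matrix n n K} {μ : K} (h : μ ∈ spectrum K A) : ∃ x ≠ 0, A *ᵥ x = μ • x := by
  rw [← spectrum_toLin', ← Module.End.hasEigenvalue_iff_mem_spectrum] at h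
  obtain ⟨x, hx⟩ := h.exists_hasEigenvector
  exact ⟨x, hx.2, by simpa using hx.apply_eq_smul⟩

theorem re_star_dotProduct_map_ofReal_mulVec (A : Matrix n n ℝ) (x : n → ℂ) :
    (star x ⬝ᵥ A.map Complex.ofReal *ᵥ x).re =
      (fun i ↦ (x i).re) ⬝ᵥ A *ᵥ (fun i ↦ (x i).re) +
        (fun i ↦ (x i).im) ⬝ᵥ A *ᵥ (fun i ↦ (x i).im) := by
  simp only [dotProduct, mulVec, Pi.star_apply, map_apply, Finset.mul_sum, Complex.re_sum,
    ← Finset.sum_add_distrib]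
  refine Finset.sum_congr rfl fun i _ ↦ Finset.sum_congr rfl fun j _ ↦ ?_
  simp only [Complex.mul_re, Complex.mul_im, Complex.ofReal_re, Complex.ofReal_im,
    RCLike.star_def, Complex.conj_re, Complex.conj_im]
  ring

theorem re_star_dotProduct_map_ofReal_mulVec_pos {A : Matrix n n ℝ}
    (hA : ∀ v : n → ℝ, v ≠ 0 → 0 < v ⬝ᵥ A *ᵥ v) {x : n → ℂ} (hx : x ≠ 0) :
    0 < (star x ⬝ᵥ A.map Complex.ofReal *ᵥ x).re := by
  have hA' (v : n → ℝ) : 0 ≤ v ⬝ᵥ A *ᵥ v := by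
    rcases eq_or_ne v 0 with rfl | hv
    · simp
    · exact (hA v hv).le
  rw [re_star_dotProduct_map_ofReal_mulVec]
  by_cases hre : (fun i ↦ (x i).re) = 0
  · have him : (fun i ↦ (x i).im) ≠ 0 := fun him ↦
      hx <| funext fun i ↦ Complex.ext (congrFun hre i) (congrFun him i)
    linarith [hA' fun i ↦ (x i).re, hA _ him]
  · linarith [hA _ hre, hA' fun i ↦ (x i).im]

theorem re_star_dotProduct_map_ofReal_mulVec_neg_of_add_transpose {K : Matrix n n ℝ}
    (hK : ∀ v : n → ℝ, v ≠ 0 → v ⬝ᵥ (K + Kᵀ) *ᵥ v < 0) {x : n → ℂ} (hx : x ≠ 0) :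
    (star x ⬝ᵥ K.map Complex.ofReal *ᵥ x).re < 0 := by
  have hpos := re_star_dotProduct_map_ofReal_mulVec_pos (A := -(K + Kᵀ))
    (fun v hv ↦ by rw [neg_mulVec, dotProduct_neg, neg_pos]; exact hK v hv) hx
  simp only [re_star_dotProduct_map_ofReal_mulVec, neg_mulVec, dotProduct_neg, add_mulVec,
    dotProduct_add, dotProduct_transpose_mulVec] at hpos ⊢
  linarith

theorem re_lt_zero_of_mulVec_eq_smul_mulVec {M K : Matrix n n ℝ} (hM : M.PosDef)
    (hK : ∀ v : n → ℝ, v ≠ 0 → v ⬝ᵥ (K + Kᵀ) *ᵥ v < 0) {μ : ℂ} {x : n → ℂ} (hx : x ≠ 0)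
    (h : K.map Complex.ofReal *ᵥ x = μ • M.map Complex.ofReal *ᵥ x) : μ.re < 0 := by
  have hMx_im : (star x ⬝ᵥ M.map Complex.ofReal *ᵥ x).im = 0 :=
    (hM.isHermitian.map _ fun _ ↦ by simp).im_star_dotProduct_mulVec_self x
  have hMx_re : 0 < (star x ⬝ᵥ M.map Complex.ofReal *ᵥ x).re :=
    re_star_dotProduct_map_ofReal_mulVec_pos
      (fun v hv ↦ by simpa using hM.dotProduct_mulVec_pos hv) hx
  have hKx := re_star_dotProduct_map_ofReal_mulVec_neg_of_add_transpose hK hx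
  rw [h, dotProduct_smul, smul_eq_mul, Complex.mul_re, hMx_im, mul_zero, sub_zero] at hKx
  exact neg_of_mul_neg_left hKx hMx_re.le

theorem re_lt_zero_of_mem_spectrum_inv_mul [DecidableEq n] {M K : Matrix n n ℝ} (hM : M.PosDef)
    (hK : ∀ v : n → ℝ, v ≠ 0 → v ⬝ᵥ (K + Kᵀ) *ᵥ v < 0) {μ : ℂ}
    (hμ : μ ∈ spectrum ℂ ((M⁻¹ * K).map Complex.ofReal)) : μ.re < 0 := by
  obtain ⟨x, hx, hμx⟩ := exists_mulVec_eq_smul_of_mem_spectrum hμ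
  refine re_lt_zero_of_mulVec_eq_smul_mulVec hM hK hx ?_
  have hMB : M.map Complex.ofReal * (M⁻¹ * K).map Complex.ofReal = K.map Complex.ofReal :=
    calc _ = (M * (M⁻¹ * K)).map Complex.ofReal := (Matrix.map_mul (f := Complex.ofRealHom)).symm
      _ = K.map Complex.ofReal := by
        rw [mul_nonsing_inv_cancel_left _ _ (M.isUnit_iff_isUnit_det.1 hM.isUnit)]
  rw [← hMB, ← mulVec_mulVec, hμx, mulVec_smul]

end Matrix

/-- Schur stability of the Euler-discretized closed loop: if `M̄` is symmetric positive
definite and `K + Kᵀ` is negative definite, then there is `Δt₀ > 0` such that for every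
`Δt ∈ (0, Δt₀)` all complex eigenvalues of `I + Δt M̄⁻¹ K` lie in the open unit disc. -/
theorem euler_closed_loop_schur_stable
    {n : Type*} [Fintype n] [DecidableEq n]
    (M : Matrix n n ℝ) (hMsym : Mᵀ = M)
    (hMpos : ∀ x : n → ℝ, x ≠ 0 → 0 < x ⬝ᵥ (M *ᵥ x))
    (K : Matrix n n ℝ) (hK : ∀ x : n → ℝ, x ≠ 0 → x ⬝ᵥ ((K + Kᵀ) *ᵥ x) < 0) :
    ∃ Δt₀ > (0 : ℝ), ∀ Δt : ℝ, 0 < Δt → Δt < Δt₀ →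
      ∀ lam : ℂ,
        ((((1 : Matrix n n ℝ) + Δt • (M⁻¹ * K)).map Complex.ofReal).charpoly).IsRoot lam →
          ‖lam‖ < 1 := by
  set B := (M⁻¹ * K).map Complex.ofReal
  have hM : M.PosDef := .of_dotProduct_mulVec_pos hMsym fun x hx ↦ by simpa using hMpos x hx
  have hstable : ∀ᶠ t : ℝ in 𝓝[>] 0, ∀ μ ∈ spectrum ℂ B, ‖1 + t * μ‖ < 1 :=
    (B.finite_spectrum.eventually_all).2 fun μ hμ ↦
      Complex.eventually_norm_one_add_mul_lt_one (re_lt_zero_of_mem_spectrum_inv_mul hM hK hμ)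
  obtain ⟨Δt₀, hΔt₀, hsub⟩ := mem_nhdsGT_iff_exists_Ioo_subset.1 hstable
  refine ⟨Δt₀, hΔt₀, fun Δt hΔt hΔtΔt₀ lam hlam ↦ ?_⟩
  have hmap : ((1 : Matrix n n ℝ) + Δt • (M⁻¹ * K)).map Complex.ofReal = 1 + (Δt : ℂ) • B := by
    rw [Matrix.map_add _ Complex.ofReal_add, Matrix.map_one _ Complex.ofReal_zero Complex.ofReal_one,
      Matrix.map_smul' _ _ _ Complex.ofReal_mul]
  rw [← mem_spectrum_iff_isRoot_charpoly, hmap,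
    spectrum.one_add_smul_eq B (Complex.ofReal_ne_zero.2 hΔt.ne')] at hlam
  obtain ⟨μ, hμ, rfl⟩ := hlam
  exact hsub ⟨hΔt, hΔtΔt₀⟩ μ hμ
end
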